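/- Let G be a locally compact group with left Haar measure μ and modular function ∇. Let X ⊆ G be compact, let g₁ ∈ C_c(G) with ∫_G g₁ dμ = 1, and let Y ⊆ G be a compact set containing the support of g₁ with 0 < μ(Y). Define g₀(u) = μ(uY ∩ (XY)⁻¹Y)/μ(Y), and set g = (∇^{−1/2} g₁) ∗ (∇^{−1/2} g₀) (convolution, where ∇^{−1/2}h denotes the pointwise product s ↦ ∇(s)^{−1/2} h(s)). Then for every s ∈ X, g(s⁻¹) = ∇(s)^{1/2}; equivalently (Kg)(s) := g(s⁻¹)∇(s)^{−1/2} = 1 for all s ∈ X. (This is the key computation in the proof of Proposition 6.2, producing g ∈ C_c(G)² with Kg ≡ 1 on X, which shows that A_p(Ĝ) contains a dense subalgebra of C*_λ(G).) -/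

import Mathlib

/-!
For `s ∈ X` and `t ∈ Y` the translate `t⁻¹s⁻¹Y = (st)⁻¹Y` lies in `(XY)⁻¹Y`, so `g₀(t⁻¹s⁻¹) = 1`
by left invariance of `μ`. The modular function `del` is multiplicative, as comparing
`map (· * (a * b)) μ` with `map (· * b) (map (· * a) μ)` on `Y` shows, so
`del(t)^{-1/2} del(t⁻¹s⁻¹)^{-1/2} = del(s)^{1/2}`. Hence on the support of `g₁` the integrand
defining `g(s⁻¹)` is `del(s)^{1/2} g₁(t)`, and `∫ g₁ = 1` finishes the computation.
-/

open MeasureTheory Filter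
open scoped ENNReal Pointwise

/-- The function `g₀(u) = μ(uY ∩ (XY)⁻¹Y)/μ(Y)` from the construction in Proposition 6.2. -/
noncomputable def gZero {G : Type*} [Group G] [MeasurableSpace G]
    (μ : Measure G) (X Y : Set G) (u : G) : ℝ :=
  (μ ((u • Y) ∩ ((X * Y)⁻¹ * Y))).toReal / (μ Y).toReal

lemma Real.rpow_neg_mul_inv_mul_inv_rpow_neg {x y : ℝ} (hx : 0 < x) (hy : 0 ≤ y) (r : ℝ) :
    x ^ (-r) * (x⁻¹ * y⁻¹) ^ (-r) = y ^ r := by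
  rw [Real.mul_rpow (inv_nonneg.2 hx.le) (inv_nonneg.2 hy), Real.inv_rpow hx.le,
    Real.inv_rpow hy, ← mul_assoc, mul_inv_cancel₀ (Real.rpow_pos_of_pos hx _).ne', one_mul,
    Real.rpow_neg hy, inv_inv]

section ModularFunction

variable {G : Type*} [Group G] {del : G → ℝ}

theorem modular_mul [MeasurableSpace G] [MeasurableMul G] {μ : Measure G} {Y : Set G}
    (hdel_pos : ∀ s, 0 < del s)
    (hdel : ∀ s : G, Measure.map (fun t => t * s) μ = ENNReal.ofReal (del s)⁻¹ • μ)
    (hY0 : μ Y ≠ 0) (hYfin : μ Y ≠ ∞) (a b : G) :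
    del (a * b) = del a * del b := by
  have ha := hdel_pos a
  have hb := hdel_pos b
  have hmeasure : ENNReal.ofReal (del (a * b))⁻¹ • μ
      = ENNReal.ofReal ((del a)⁻¹ * (del b)⁻¹) • μ := by
    rw [← hdel, ENNReal.ofReal_mul (by positivity), mul_smul, ← hdel b, ← Measure.map_smul,
      ← hdel a, Measure.map_map (measurable_mul_const b) (measurable_mul_const a)]
    simp only [Function.comp_def, mul_assoc]
  have hY := congrArg (· Y) hmeasure
  simp only [Measure.smul_apply, smul_eq_mul] at hY
  rw [ENNReal.mul_left_inj hY0 hYfin, ENNReal.ofReal_eq_ofReal_iff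
    (inv_nonneg.2 (hdel_pos _).le) (by positivity), ← mul_inv, inv_inj] at hY
  exact hY

theorem modular_one (hdel_pos : ∀ s, 0 < del s)
    (hmul : ∀ a b : G, del (a * b) = del a * del b) : del 1 = 1 := by
  have h := hmul 1 1
  rw [mul_one] at h
  nlinarith [hdel_pos 1]

theorem modular_inv (hdel_pos : ∀ s, 0 < del s)
    (hmul : ∀ a b : G, del (a * b) = del a * del b) (a : G) : del a⁻¹ = (del a)⁻¹ := by
  have h := hmul a⁻¹ a
  rw [inv_mul_cancel, modular_one hdel_pos hmul] at h
  exact eq_inv_of_mul_eq_one_left h.symm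

end ModularFunction

lemma inv_mul_inv_smul_subset {G : Type*} [Group G] {X Y : Set G} {s t : G} (hs : s ∈ X)
    (ht : t ∈ Y) : (t⁻¹ * s⁻¹) • Y ⊆ (X * Y)⁻¹ * Y := by
  rw [← mul_inv_rev]
  exact Set.smul_set_subset_mul (Set.inv_mem_inv.2 (Set.mul_mem_mul hs ht))

lemma gZero_eq_one_of_smul_subset {G : Type*} [Group G] [MeasurableSpace G] {μ : Measure G}
    [μ.IsMulLeftInvariant] {X Y : Set G} (hY0 : μ Y ≠ 0) (hYfin : μ Y ≠ ∞)
    {u : G} (hu : u • Y ⊆ (X * Y)⁻¹ * Y) : gZero μ X Y u = 1 := by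
  rw [gZero, Set.inter_eq_self_of_subset_left hu, measure_smul]
  exact div_self (ENNReal.toReal_ne_zero.2 ⟨hY0, hYfin⟩)

theorem stmt_9_general {G : Type*} [Group G] [TopologicalSpace G] [IsTopologicalGroup G]
    [MeasurableSpace G] [BorelSpace G]
    (μ : Measure G) [Measure.IsHaarMeasure μ]
    (del : G → ℝ) (hdel_pos : ∀ s, 0 < del s)
    (hdel : ∀ s : G, Measure.map (fun t => t * s) μ = ENNReal.ofReal (del s)⁻¹ • μ)
    (X : Set G)
    (g₁ : G → ℂ)
    (hg₁int : ∫ t, g₁ t ∂μ = 1)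
    (Y : Set G) (hY : IsCompact Y) (hYsupp : tsupport g₁ ⊆ Y) (hY0 : 0 < μ Y) :
    ∀ s ∈ X,
      (∫ t, (((del t ^ (-(1/2) : ℝ) : ℝ) : ℂ) * g₁ t) *
          (((del (t⁻¹ * s⁻¹) ^ (-(1/2) : ℝ) : ℝ) : ℂ) *
            ((gZero μ X Y (t⁻¹ * s⁻¹) : ℝ) : ℂ)) ∂μ)
        = ((del s ^ ((1:ℝ)/2) : ℝ) : ℂ) ∧
      (∫ t, (((del t ^ (-(1/2) : ℝ) : ℝ) : ℂ) * g₁ t) *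
          (((del (t⁻¹ * s⁻¹) ^ (-(1/2) : ℝ) : ℝ) : ℂ) *
            ((gZero μ X Y (t⁻¹ * s⁻¹) : ℝ) : ℂ)) ∂μ) *
          ((del s ^ (-(1/2) : ℝ) : ℝ) : ℂ) = 1 := by
  intro s hs
  have hYfin : μ Y ≠ ∞ := hY.measure_lt_top.ne
  have hmul := modular_mul hdel_pos hdel hY0.ne' hYfin
  have hintegrand : ∀ t, (((del t ^ (-(1/2) : ℝ) : ℝ) : ℂ) * g₁ t) *
      (((del (t⁻¹ * s⁻¹) ^ (-(1/2) : ℝ) : ℝ) : ℂ) * ((gZero μ X Y (t⁻¹ * s⁻¹) : ℝ) : ℂ))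
        = ((del s ^ ((1:ℝ)/2) : ℝ) : ℂ) * g₁ t := by
    intro t
    by_cases ht : t ∈ tsupport g₁
    · rw [gZero_eq_one_of_smul_subset hY0.ne' hYfin (inv_mul_inv_smul_subset hs (hYsupp ht)),
        hmul, modular_inv hdel_pos hmul, modular_inv hdel_pos hmul,
        ← Real.rpow_neg_mul_inv_mul_inv_rpow_neg (hdel_pos t) (hdel_pos s).le,
        Complex.ofReal_mul, Complex.ofReal_one]
      ring
    · simp [image_eq_zero_of_notMem_tsupport ht]
  have hintegral : (∫ t, (((del t ^ (-(1/2) : ℝ) : ℝ) : ℂ) * g₁ t) *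
      (((del (t⁻¹ * s⁻¹) ^ (-(1/2) : ℝ) : ℝ) : ℂ) * ((gZero μ X Y (t⁻¹ * s⁻¹) : ℝ) : ℂ)) ∂μ)
        = ((del s ^ ((1:ℝ)/2) : ℝ) : ℂ) := by
    rw [integral_congr_ae (.of_forall hintegrand), integral_const_mul, hg₁int, mul_one]
  refine ⟨hintegral, ?_⟩
  rw [hintegral, ← Complex.ofReal_mul, ← Real.rpow_add (hdel_pos s)]
  norm_num

/-- Let `G` be a locally compact group with left Haar measure `μ` and modular
function `del`.  Let `X ⊆ G` be compact, `g₁ ∈ C_c(G)` with `∫_G g₁ dμ = 1`, and `Y` a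
compact set containing the support of `g₁` with `0 < μ(Y)`.  With
`g₀(u) = μ(uY ∩ (XY)⁻¹Y)/μ(Y)` and `g = (del^{-1/2} g₁) ∗ (del^{-1/2} g₀)` (so that
`g(s⁻¹) = ∫_G (del t)^{-1/2} g₁(t) · (del (t⁻¹s⁻¹))^{-1/2} g₀(t⁻¹s⁻¹) dμ(t)`), we have for
every `s ∈ X` that `g(s⁻¹) = (del s)^{1/2}`; equivalently `(Kg)(s) = g(s⁻¹)(del s)^{-1/2} = 1`
for all `s ∈ X`. -/
theorem stmt_9 {G : Type*} [Group G] [TopologicalSpace G] [IsTopologicalGroup G]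
    [LocallyCompactSpace G] [T2Space G] [MeasurableSpace G] [BorelSpace G]
    (μ : Measure G) [Measure.IsHaarMeasure μ]
    (del : G → ℝ) (hdel_pos : ∀ s, 0 < del s) (hdel_cont : Continuous del)
    (hdel : ∀ s : G, Measure.map (fun t => t * s) μ = ENNReal.ofReal (del s)⁻¹ • μ)
    (X : Set G) (hX : IsCompact X)
    (g₁ : G → ℂ) (hg₁ : Continuous g₁) (hg₁c : HasCompactSupport g₁)
    (hg₁int : ∫ t, g₁ t ∂μ = 1)
    (Y : Set G) (hY : IsCompact Y) (hYsupp : tsupport g₁ ⊆ Y) (hY0 : 0 < μ Y) :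
    ∀ s ∈ X,
      (∫ t, (((del t ^ (-(1/2) : ℝ) : ℝ) : ℂ) * g₁ t) *
          (((del (t⁻¹ * s⁻¹) ^ (-(1/2) : ℝ) : ℝ) : ℂ) *
            ((gZero μ X Y (t⁻¹ * s⁻¹) : ℝ) : ℂ)) ∂μ)
        = ((del s ^ ((1:ℝ)/2) : ℝ) : ℂ) ∧
      (∫ t, (((del t ^ (-(1/2) : ℝ) : ℝ) : ℂ) * g₁ t) *
          (((del (t⁻¹ * s⁻¹) ^ (-(1/2) : ℝ) : ℝ) : ℂ) *
            ((gZero μ X Y (t⁻¹ * s⁻¹) : ℝ) : ℂ)) ∂μ) *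
          ((del s ^ (-(1/2) : ℝ) : ℝ) : ℂ) = 1 :=
  stmt_9_general μ del hdel_pos hdel X g₁ hg₁int Y hY hYsupp hY0
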